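/- arXiv:2107.12035 — 3 statements merged into one kernel-verified Lean document; each statement's English description precedes it below -/
import Mathlib

section
/- (Proposition 2.4, second part.) Let n ≥ 2 and 2 ≤ k ≤ n. For every λ ∈ Γ_{k-1} and every index i ∈ {1,…,n}, the partial derivative with respect to the i-th coordinate of the function μ ↦ σ_k(μ)/σ_{k-1}(μ) is nonnegative at λ. (The function is well defined and smooth on the open set Γ_{k-1}, since σ_{k-1} > 0 on Γ_{k-1}.) -/
/-!
Along the line `λ + t eᵢ` both `σ_k` and `σ_{k-1}` are affine in `t`, with slopes `σ_{k-1}(λ|i)`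
and `σ_{k-2}(λ|i)`, where `λ|i` forgets the `i`-th coordinate. By the quotient rule the partial
derivative is `(σ_{k-1}(λ|i)² - σ_k(λ|i) σ_{k-2}(λ|i)) / σ_{k-1}(λ)²`, and the numerator is
nonnegative by Newton's inequality, which holds for arbitrary real vectors.

Newton's inequality is proved in the classical way. The polynomial `∏ⱼ (X + λⱼ)` is real-rooted,
hence so are its derivatives (Rolle), and a suitable derivative has the three symmetric functions
in question as its constant, linear and quadratic coefficients. For a real-rooted polynomial of
degree `N` these are, up to the leading coefficient, `e_N`, `e_{N-1}`, `e_{N-2}` of the negated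
roots, and Cauchy–Schwarz applied to the products `Pᵢ` of all of them but one gives
`(∑ Pᵢ)² ≤ N ∑ Pᵢ² = N (e_{N-1}² - 2 e_N e_{N-2})`.
-/

/-- The `k`-th elementary symmetric function of a vector `lam ∈ ℝⁿ`. -/
noncomputable def esymm (n k : ℕ) (lam : Fin n → ℝ) : ℝ :=
  ∑ s ∈ Finset.powersetCard k (Finset.univ : Finset (Fin n)), ∏ i ∈ s, lam i

/-- The Gårding cone `Γ_k = {λ ∈ ℝⁿ : σ_j(λ) > 0 for all 1 ≤ j ≤ k}`. -/
def GammaCone (n k : ℕ) : Set (Fin n → ℝ) :=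
  {lam | ∀ j : ℕ, 1 ≤ j → j ≤ k → 0 < esymm n j lam}

open Finset Polynomial

section Combinatorics

variable {ι R : Type*} [DecidableEq ι] [CommSemiring R]

theorem Finset.sum_sum_powersetCard_erase (s : Finset ι) (m : ℕ) (f : ι → R) :
    ∑ i ∈ s, ∑ t ∈ (s.erase i).powersetCard m, ∏ l ∈ t, f l
      = (#s - m) • ∑ t ∈ s.powersetCard m, ∏ l ∈ t, f l := by
  have avoid : ∀ i, (s.erase i).powersetCard m = (s.powersetCard m).filter (i ∉ ·) := by
    intro i; ext t
    simp only [mem_powersetCard, mem_filter, subset_erase]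
    tauto
  simp_rw [avoid, sum_filter]
  rw [sum_comm, smul_sum]
  refine sum_congr rfl fun t ht => ?_
  obtain ⟨hts, hcard⟩ := mem_powersetCard.mp ht
  rw [← sum_filter, sum_const, ← sdiff_eq_filter, card_sdiff_of_subset hts, hcard]

theorem Finset.sum_prod_erase_eq_sum_powersetCard {s : Finset ι} (hs : s.Nonempty) (f : ι → R) :
    ∑ j ∈ s, ∏ l ∈ s.erase j, f l = ∑ t ∈ s.powersetCard (#s - 1), ∏ l ∈ t, f l := by
  have single : ∀ j ∈ s, (s.erase j).powersetCard (#s - 1) = {s.erase j} := fun j hj => by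
    rw [← card_erase_of_mem hj, powersetCard_self]
  have one : #s - (#s - 1) = 1 := by have := hs.card_pos; omega
  calc ∑ j ∈ s, ∏ l ∈ s.erase j, f l
      = ∑ j ∈ s, ∑ t ∈ (s.erase j).powersetCard (#s - 1), ∏ l ∈ t, f l :=
        sum_congr rfl fun j hj => by rw [single j hj, sum_singleton]
    _ = _ := by rw [sum_sum_powersetCard_erase, one, one_smul]

theorem Finset.prod_erase_mul_prod_erase {M : Type*} [CommMonoid M] {s : Finset ι} {i j : ι}
    (hi : i ∈ s) (hj : j ∈ s) (hij : i ≠ j) (f : ι → M) :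
    (∏ l ∈ s.erase i, f l) * ∏ l ∈ s.erase j, f l
      = (∏ l ∈ s, f l) * ∏ l ∈ (s.erase i).erase j, f l := by
  have hj' : j ∈ s.erase i := mem_erase.mpr ⟨hij.symm, hj⟩
  rw [← mul_prod_erase _ f hj', ← mul_prod_erase _ f (mem_erase.mpr ⟨hij, hi⟩),
    erase_right_comm (a := j), ← mul_prod_erase s f hi, ← mul_prod_erase _ f hj']
  ac_rfl

theorem Multiset.esymm_cons_succ (a : R) (s : Multiset R) (k : ℕ) :
    (a ::ₘ s).esymm (k + 1) = s.esymm (k + 1) + a * s.esymm k := by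
  simp [Multiset.esymm, Multiset.powersetCard_cons, Multiset.sum_map_mul_left]

theorem Finset.sum_powersetCard_insert_succ {a : ι} {s : Finset ι} (ha : a ∉ s) (f : ι → R)
    (k : ℕ) :
    ∑ t ∈ (insert a s).powersetCard (k + 1), ∏ l ∈ t, f l
      = ∑ t ∈ s.powersetCard (k + 1), ∏ l ∈ t, f l
        + f a * ∑ t ∈ s.powersetCard k, ∏ l ∈ t, f l := by
  simp only [← Finset.esymm_map_val, Finset.insert_val_of_notMem ha, Multiset.map_cons,
    Multiset.esymm_cons_succ]

end Combinatorics

theorem Finset.two_mul_prod_mul_sum_powersetCard_le {ι R : Type*} [DecidableEq ι] [CommRing R]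
    [LinearOrder R] [IsStrictOrderedRing R] {s : Finset ι} {N : ℕ} (hs : #s = N + 2)
    (f : ι → R) :
    2 * (N + 2) * ((∏ l ∈ s, f l) * ∑ t ∈ s.powersetCard N, ∏ l ∈ t, f l)
      ≤ (N + 1) * (∑ t ∈ s.powersetCard (N + 1), ∏ l ∈ t, f l) ^ 2 := by
  set P : ι → R := fun i => ∏ l ∈ s.erase i, f l
  have hsum : ∑ i ∈ s, P i = ∑ t ∈ s.powersetCard (N + 1), ∏ l ∈ t, f l := by
    rw [sum_prod_erase_eq_sum_powersetCard (card_pos.mp (by omega)), hs]; rfl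
  have hpair : ∀ i ∈ s, ∑ j ∈ s.erase i, P i * P j
      = (∏ l ∈ s, f l) * ∑ t ∈ (s.erase i).powersetCard N, ∏ l ∈ t, f l := fun i hi => by
    have hcard : #(s.erase i) = N + 1 := by rw [card_erase_of_mem hi, hs]; rfl
    rw [← Nat.add_sub_cancel N 1, ← hcard,
      ← sum_prod_erase_eq_sum_powersetCard (card_pos.mp (by omega)), mul_sum]
    exact sum_congr rfl fun j hj =>
      prod_erase_mul_prod_erase hi (mem_of_mem_erase hj) (ne_of_mem_erase hj).symm f
  have hcross : ∑ i ∈ s, ∑ j ∈ s.erase i, P i * P j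
      = 2 * ((∏ l ∈ s, f l) * ∑ t ∈ s.powersetCard N, ∏ l ∈ t, f l) := by
    rw [sum_congr rfl hpair, ← mul_sum, sum_sum_powersetCard_erase, hs,
      show N + 2 - N = 2 by omega, nsmul_eq_mul]
    push_cast
    ring
  have hsq : (∑ i ∈ s, P i) ^ 2 = ∑ i ∈ s, P i ^ 2 + ∑ i ∈ s, ∑ j ∈ s.erase i, P i * P j := by
    rw [sq, sum_mul_sum, ← sum_add_distrib]
    exact sum_congr rfl fun i hi => by rw [← add_sum_erase _ _ hi, sq]
  have cauchySchwarz : (∑ i ∈ s, P i) ^ 2 ≤ #s * ∑ i ∈ s, P i ^ 2 := sq_sum_le_card_mul_sum_sq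
  rw [hs] at cauchySchwarz
  push_cast at cauchySchwarz
  rw [← hsum]
  nlinarith

namespace Polynomial

theorem natDegree_iterate_derivative_eq {R : Type*} [Semiring R] [IsAddTorsionFree R]
    (p : R[X]) (a : ℕ) : (derivative^[a] p).natDegree = p.natDegree - a := by
  induction a with
  | zero => rfl
  | succ a ih => rw [Function.iterate_succ_apply', natDegree_derivative, ih, Nat.sub_sub]

theorem Splits.derivative_of_real {p : ℝ[X]} (hp : p.Splits) : (derivative p).Splits := by
  rw [splits_iff_card_roots] at hp ⊢
  have rolle := card_roots_le_derivative p
  have := card_roots' (derivative p)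
  rw [natDegree_derivative] at this ⊢
  omega

theorem Splits.iterate_derivative_of_real {p : ℝ[X]} (hp : p.Splits) (a : ℕ) :
    (derivative^[a] p).Splits := by
  induction a with
  | zero => exact hp
  | succ a ih => rw [Function.iterate_succ_apply']; exact ih.derivative_of_real

theorem Splits.two_mul_coeff_zero_mul_coeff_two_le {g : ℝ[X]} (hg : g.Splits) {N : ℕ}
    (hdeg : g.natDegree = N + 2) :
    2 * (N + 2) * (g.coeff 0 * g.coeff 2) ≤ (N + 1) * g.coeff 1 ^ 2 := by
  classical
  set r : g.roots → ℝ := fun x => -(x : ℝ)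
  have hprod : g = C g.leadingCoeff * ∏ x, (X + C (r x)) := by
    conv_lhs => rw [hg.eq_prod_roots, ← Multiset.map_univ, prod_map_val]
    simp [r, sub_eq_add_neg]
  have hcard : #(univ : Finset g.roots) = N + 2 := by
    rw [card_univ, Multiset.card_coe, ← hdeg, splits_iff_card_roots.mp hg]
  have hcoeff : ∀ m ≤ N + 2, g.coeff m
      = g.leadingCoeff * ∑ t ∈ univ.powersetCard (N + 2 - m), ∏ x ∈ t, r x := fun m hm => by
    conv_lhs => rw [hprod]
    rw [coeff_C_mul, prod_X_add_C_coeff _ _ (hcard ▸ hm), hcard]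
  have htop : ∑ t ∈ (univ : Finset g.roots).powersetCard (N + 2), ∏ x ∈ t, r x = ∏ x, r x := by
    rw [← hcard, powersetCard_self, sum_singleton]
  have newton := mul_le_mul_of_nonneg_left (two_mul_prod_mul_sum_powersetCard_le hcard r)
    (sq_nonneg g.leadingCoeff)
  rw [hcoeff 0 (by omega), hcoeff 1 (by omega), hcoeff 2 (by omega), Nat.sub_zero, htop,
    show N + 2 - 1 = N + 1 by omega, show N + 2 - 2 = N by omega]
  linear_combination newton

end Polynomial

section Newton

variable {ι : Type*} (A : Finset ι) (f : ι → ℝ) (k : ℕ)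

-- Newton's inequality `E_{k+1}² ≥ E_{k+2} E_k` for the normalized `E_j = e_j / C(#A, j)`.
theorem Finset.newton_inequality {a : ℕ} (hA : #A = k + 2 + a) :
    ((k : ℝ) + 2) * (a + 2) * ((∑ t ∈ A.powersetCard (k + 2), ∏ l ∈ t, f l)
        * ∑ t ∈ A.powersetCard k, ∏ l ∈ t, f l)
      ≤ ((k : ℝ) + 1) * (a + 1) * (∑ t ∈ A.powersetCard (k + 1), ∏ l ∈ t, f l) ^ 2 := by
  classical
  set e : ℕ → ℝ := fun j => ∑ t ∈ A.powersetCard j, ∏ l ∈ t, f l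
  set P : ℝ[X] := ∏ j ∈ A, (X + C (f j))
  have hP : P.Splits := Splits.prod fun j _ => Splits.X_add_C (f j)
  have hPdeg : P.natDegree = #A := by
    simp [P, natDegree_prod_of_monic _ _ fun j _ => monic_X_add_C (f j)]
  have hgdeg : (derivative^[a] P).natDegree = k + 2 := by
    rw [natDegree_iterate_derivative_eq, hPdeg]; omega
  have hcoeff : ∀ m ≤ 2,
      (derivative^[a] P).coeff m = ((a + m).descFactorial a : ℝ) * e (k + 2 - m) :=
    fun m hm => by
      rw [coeff_iterate_derivative, prod_X_add_C_coeff _ _ (by omega), nsmul_eq_mul, add_comm m,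
        show #A - (a + m) = k + 2 - m by omega]
  have h₁ : (a + 1).descFactorial a = (a + 1) * a.descFactorial a := by
    simpa using Nat.succ_descFactorial a a
  have h₂ : 2 * (a + 2).descFactorial a = (a + 2) * (a + 1) * a.descFactorial a := by
    have := Nat.succ_descFactorial (a + 1) a
    rw [show a + 1 + 1 - a = 2 by omega] at this
    rw [mul_assoc, ← h₁]
    exact this
  have h₁' : ((a + 1).descFactorial a : ℝ) = (a + 1) * a.descFactorial a := by exact_mod_cast h₁
  have h₂' : 2 * ((a + 2).descFactorial a : ℝ) = (a + 2) * (a + 1) * a.descFactorial a := by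
    exact_mod_cast h₂
  have top := (hP.iterate_derivative_of_real a).two_mul_coeff_zero_mul_coeff_two_le hgdeg
  rw [hcoeff 0 (by norm_num), hcoeff 1 (by norm_num), hcoeff 2 (by norm_num), add_zero,
    Nat.sub_zero, h₁', show k + 2 - 1 = k + 1 by omega, show k + 2 - 2 = k by omega] at top
  have hD : 0 < (a.descFactorial a : ℝ) := by
    rw [Nat.descFactorial_self]
    positivity
  refine le_of_mul_le_mul_left ?_ (by positivity : (0 : ℝ) < (a + 1) * a.descFactorial a ^ 2)
  linear_combination top - ((k : ℝ) + 2) * a.descFactorial a * e (k + 2) * e k * h₂'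

theorem Finset.sum_powersetCard_mul_sum_powersetCard_le_sq :
    (∑ t ∈ A.powersetCard (k + 2), ∏ l ∈ t, f l) * ∑ t ∈ A.powersetCard k, ∏ l ∈ t, f l
      ≤ (∑ t ∈ A.powersetCard (k + 1), ∏ l ∈ t, f l) ^ 2 := by
  obtain hsmall | ⟨a, hA⟩ : #A < k + 2 ∨ ∃ a, #A = k + 2 + a :=
    (lt_or_ge _ _).imp_right fun h => ⟨#A - (k + 2), by omega⟩
  · rw [powersetCard_eq_empty.mpr hsmall, sum_empty, zero_mul]
    positivity
  rcases le_or_gt ((∑ t ∈ A.powersetCard (k + 2), ∏ l ∈ t, f l)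
      * ∑ t ∈ A.powersetCard k, ∏ l ∈ t, f l) 0 with hneg | hpos
  · exact hneg.trans (sq_nonneg _)
  refine le_of_mul_le_mul_left ((newton_inequality A f k hA).trans' ?_)
    (by positivity : (0 : ℝ) < (k + 1) * (a + 1))
  gcongr <;> linarith

end Newton

theorem HasLineDerivAt.div {𝕜 E : Type*} [NontriviallyNormedField 𝕜] [AddCommGroup E]
    [Module 𝕜 E] {f g : E → 𝕜} {f' g' : 𝕜} {x v : E} (hf : HasLineDerivAt 𝕜 f f' x v)
    (hg : HasLineDerivAt 𝕜 g g' x v) (hx : g x ≠ 0) :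
    HasLineDerivAt 𝕜 (fun y => f y / g y) ((f' * g x - f x * g') / g x ^ 2) x v := by
  unfold HasLineDerivAt at *
  simpa using hf.fun_div hg (by simpa using hx)

section Esymm

variable {n : ℕ}

theorem differentiable_esymm (k : ℕ) : Differentiable ℝ (esymm n k) := by
  unfold esymm
  fun_prop

theorem esymm_succ_eq (lam : Fin n → ℝ) (i : Fin n) (j : ℕ) :
    esymm n (j + 1) lam = ∑ t ∈ (univ.erase i).powersetCard (j + 1), ∏ l ∈ t, lam l
      + lam i * ∑ t ∈ (univ.erase i).powersetCard j, ∏ l ∈ t, lam l := by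
  conv_lhs => rw [esymm, ← insert_erase (mem_univ i)]
  exact sum_powersetCard_insert_succ (notMem_erase i _) lam j

theorem hasLineDerivAt_esymm_succ (lam : Fin n → ℝ) (i : Fin n) (j : ℕ) :
    HasLineDerivAt ℝ (esymm n (j + 1))
      (∑ t ∈ (univ.erase i).powersetCard j, ∏ l ∈ t, lam l) lam (Pi.single i 1) := by
  set E : ℕ → ℝ := fun m => ∑ t ∈ (univ.erase i).powersetCard m, ∏ l ∈ t, lam l
  have hline : ∀ t : ℝ,
      esymm n (j + 1) (lam + t • Pi.single i 1) = E (j + 1) + (lam i + t) * E j := fun t => by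
    have off : ∀ m, ∑ s ∈ (univ.erase i).powersetCard m,
        ∏ l ∈ s, (lam + t • Pi.single i 1 : Fin n → ℝ) l = E m :=
      fun m => sum_congr rfl fun s hs => prod_congr rfl fun l hl => by
        simp [Pi.single_eq_of_ne (ne_of_mem_erase ((mem_powersetCard.mp hs).1 hl))]
    rw [esymm_succ_eq _ i, off, off]
    simp
  unfold HasLineDerivAt
  simp_rw [hline]
  simpa using (((hasDerivAt_id (0 : ℝ)).const_add (lam i)).mul_const (E j)).const_add (E (j + 1))

end Esymm

theorem quotient_operator_elliptic_on_lower_cone_general (n k : ℕ) (hk : 2 ≤ k)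
    (lam : Fin n → ℝ) (hlam : lam ∈ GammaCone n (k - 1)) (i : Fin n) :
    0 ≤ fderiv ℝ (fun mu : Fin n → ℝ => esymm n k mu / esymm n (k - 1) mu) lam
          (Pi.single i 1) := by
  obtain ⟨m, rfl⟩ : ∃ m, k = m + 1 + 1 := ⟨k - 2, by omega⟩
  rw [Nat.add_sub_cancel]
  have hσ : 0 < esymm n (m + 1) lam := hlam (m + 1) (by omega) le_rfl
  have hdiff : DifferentiableAt ℝ (fun mu => esymm n (m + 1 + 1) mu / esymm n (m + 1) mu) lam := by
    have := differentiable_esymm (n := n) (m + 1 + 1)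
    have := differentiable_esymm (n := n) (m + 1)
    fun_prop (disch := exact hσ.ne')
  have hline :=
    (hasLineDerivAt_esymm_succ lam i (m + 1)).div (hasLineDerivAt_esymm_succ lam i m) hσ.ne'
  rw [← hdiff.lineDeriv_eq_fderiv, hline.lineDeriv, esymm_succ_eq lam i (m + 1),
    esymm_succ_eq lam i m]
  refine div_nonneg ?_ (sq_nonneg _)
  linear_combination sum_powersetCard_mul_sum_powersetCard_le_sq (univ.erase i) lam m

/-- Proposition 2.4, second part: for `2 ≤ k ≤ n` and `λ ∈ Γ_{k-1}`, each partial
derivative of `μ ↦ σ_k(μ)/σ_{k-1}(μ)` is nonnegative at `λ`. -/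
theorem quotient_operator_elliptic_on_lower_cone (n k : ℕ) (hn : 2 ≤ n) (hk : 2 ≤ k)
    (hkn : k ≤ n) (lam : Fin n → ℝ) (hlam : lam ∈ GammaCone n (k - 1)) (i : Fin n) :
    0 ≤ fderiv ℝ (fun mu : Fin n → ℝ => esymm n k mu / esymm n (k - 1) mu) lam
          (Pi.single i 1) :=
  quotient_operator_elliptic_on_lower_cone_general n k hk lam hlam i
end

section
/- (Lemma 2.8, first part.) Let n ≥ 2 and 1 ≤ l < k ≤ n. If λ ∈ Γ_k, then for every index i ∈ {1,…,n} one has σ_{l-1}(λ|i) > 0, σ_l(λ) > 0, and the strict inequality σ_{k-1}(λ|i)·σ_l(λ) > σ_k(λ)·σ_{l-1}(λ|i); equivalently, σ_{k-1}(λ|i)/σ_{l-1}(λ|i) > σ_k(λ)/σ_l(λ). -/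
/-!
Write `t` for `λ` with its `i`-th entry removed and `x = λ_i`. Then `σ_j(λ|i) = σ_j(t)` and
`σ_j(λ) = σ_j(t) + x σ_{j-1}(t)`, the terms in `x` cancel, and the inequality becomes
`σ_k(t) σ_{l-1}(t) < σ_{k-1}(t) σ_l(t)`, i.e. the ratios `σ_{j+1}(t) / σ_j(t)` strictly decrease.
This follows from Newton's inequalities `E_m E_{m+2} ≤ E_{m+1}²` for the means
`E_j = σ_j / C(N, j)` and the strict log-concavity of binomial coefficients; the same inequality
shows that `σ_j(t) > 0` for `j < k`.

Newton's inequalities are proved classically: replacing `t` by the roots of the derivative of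
`∏ (X - a)`, which are real by Rolle's theorem, keeps `E_0, …, E_{N-1}`; replacing `a` by `a⁻¹`
exchanges `E_j` and `E_{N-j}`; and the remaining case `E_2 ≤ E_1²` is Cauchy–Schwarz.
-/

theorem Nat.choose_mul_choose_add_two_lt_sq {N m : ℕ} (h : m + 2 ≤ N) :
    N.choose m * N.choose (m + 2) < N.choose (m + 1) ^ 2 := by
  obtain ⟨d, rfl⟩ := Nat.exists_eq_add_of_le h
  have h1 := Nat.choose_succ_right_eq (m + 2 + d) m
  have h2 := Nat.choose_succ_right_eq (m + 2 + d) (m + 1)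
  rw [show m + 2 + d - m = d + 2 by omega] at h1
  rw [show m + 2 + d - (m + 1) = d + 1 by omega] at h2
  have hpos : 0 < (m + 2 + d).choose (m + 1) := Nat.choose_pos (by omega)
  nlinarith

theorem mul_lt_mul_of_mul_lt_sq {a : ℕ → ℝ} {k : ℕ} (hpos : ∀ j ≤ k, 0 < a j)
    (hlc : ∀ m, m + 2 ≤ k + 1 → a m * a (m + 2) < a (m + 1) ^ 2) {j : ℕ} (hjk : j < k) :
    a (k + 1) * a j < a k * a (j + 1) := by
  have hanti : StrictAntiOn (fun m => a (m + 1) / a m) (Set.Iic k) := by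
    refine strictAntiOn_Iic_of_succ_lt fun m hm => ?_
    show a (m + 2) / a (m + 1) < a (m + 1) / a m
    rw [div_lt_div_iff₀ (hpos _ (by omega)) (hpos _ (by omega)), ← sq, mul_comm]
    exact hlc m (by omega)
  have := hanti (Set.mem_Iic.mpr hjk.le) (Set.mem_Iic.mpr le_rfl) hjk
  rwa [div_lt_div_iff₀ (hpos _ le_rfl) (hpos _ hjk.le), mul_comm (a (j + 1))] at this

namespace Multiset

section CommSemiring

variable {R : Type*} [CommSemiring R]

theorem esymm_zero (s : Multiset R) : s.esymm 0 = 1 := by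
  simp [esymm]

theorem esymm_eq_zero_of_card_lt {s : Multiset R} {m : ℕ} (h : card s < m) : s.esymm m = 0 := by
  simp [esymm, powersetCard_eq_empty _ h]

theorem esymm_card (s : Multiset R) : s.esymm (card s) = s.prod := by
  simp [esymm]

theorem esymm_one (s : Multiset R) : s.esymm 1 = s.sum := by
  simp [esymm, powersetCard_one]

theorem esymm_cons_succ_s7 (a : R) (s : Multiset R) (m : ℕ) :
    (a ::ₘ s).esymm (m + 1) = s.esymm (m + 1) + a * s.esymm m := by
  simp [esymm, powersetCard_cons, ← sum_map_mul_left]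

theorem esymm_zero_cons (s : Multiset R) (m : ℕ) : ((0 : R) ::ₘ s).esymm m = s.esymm m := by
  cases m <;> simp [esymm_zero, esymm_cons_succ_s7]

theorem sq_sum_eq_sum_sq_add_two_mul_esymm_two (s : Multiset R) :
    s.sum ^ 2 = (s.map (· ^ 2)).sum + 2 * s.esymm 2 := by
  induction s using Multiset.induction with
  | empty => simp [esymm_eq_zero_of_card_lt (s := (0 : Multiset R)) (m := 2) (by simp)]
  | cons a s ih =>
    rw [esymm_cons_succ_s7, esymm_one, sum_cons, map_cons, sum_cons, add_sq, ih]
    ring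

end CommSemiring

theorem prod_mul_esymm_map_inv {K : Type*} [Field K] {s : Multiset K} (h0 : (0 : K) ∉ s)
    {i j : ℕ} (hij : i + j = card s) : s.prod * (s.map (·⁻¹)).esymm i = s.esymm j := by
  induction s using Multiset.induction generalizing i j with
  | empty =>
    obtain ⟨rfl, rfl⟩ : i = 0 ∧ j = 0 := by simpa using hij
    simp [esymm_zero]
  | cons a s ih =>
    obtain ⟨ha, hs⟩ : a ≠ 0 ∧ (0 : K) ∉ s := by simpa [eq_comm] using h0
    rw [card_cons] at hij
    rcases i with _ | i <;> rcases j with _ | j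
    · omega
    · rw [esymm_zero, mul_one, show j + 1 = card (a ::ₘ s) by simp; omega, esymm_card]
    · have h1 := ih hs (i := i) (j := 0) (by omega)
      rw [esymm_zero] at h1
      rw [map_cons, esymm_cons_succ_s7, prod_cons, esymm_zero,
        esymm_eq_zero_of_card_lt (by simp; omega), zero_add, mul_mul_mul_comm,
        mul_inv_cancel₀ ha, one_mul, h1]
    · rw [map_cons, esymm_cons_succ_s7, prod_cons, esymm_cons_succ_s7,
        ← ih hs (i := i + 1) (j := j) (by omega), ← ih hs (i := i) (j := j + 1) (by omega)]
      field_simp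
      ring

theorem sq_sum_le_card_mul_sum_sq (s : Multiset ℝ) :
    s.sum ^ 2 ≤ card s * (s.map (· ^ 2)).sum := by
  have h := _root_.sq_sum_le_card_mul_sum_sq (s := s.toEnumFinset) (f := Prod.fst)
  have hsq : s.toEnumFinset.val.map (fun p => p.1 ^ 2) = s.map (· ^ 2) := by
    conv_rhs => rw [← map_toEnumFinset_fst s, map_map]
    rfl
  simpa [Finset.sum, hsq] using h

open Polynomial in
theorem exists_card_eq_mul_esymm_eq (s : Multiset ℝ) {N : ℕ} (hs : card s = N + 1) :
    ∃ u : Multiset ℝ, card u = N ∧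
      ∀ j ≤ N, ((N : ℝ) + 1) * u.esymm j = ((N : ℝ) + 1 - j) * s.esymm j := by
  set p : ℝ[X] := (s.map fun a => X - C a).prod
  have hp_roots : p.roots = s := roots_multiset_prod_X_sub_C s
  have hp_deg : p.natDegree = N + 1 := by rw [natDegree_multiset_prod_X_sub_C_eq_card, hs]
  have hp_monic : p.Monic := monic_multiset_prod_of_monic _ _ fun a _ => monic_X_sub_C a
  set q := derivative p
  have hq_top : q.coeff N = N + 1 := by
    rw [coeff_derivative, ← hp_deg, hp_monic.coeff_natDegree, one_mul]
  have hq_deg : q.natDegree = N :=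
    le_antisymm ((natDegree_derivative_le p).trans (by rw [hp_deg]; simp))
      (le_natDegree_of_ne_zero (by rw [hq_top]; positivity))
  have hq_roots : card q.roots = q.natDegree := by
    refine le_antisymm (card_roots' q) ?_
    have : N + 1 ≤ card q.roots + 1 := hs ▸ hp_roots ▸ card_roots_le_derivative p
    omega
  refine ⟨q.roots, by omega, fun j hj => ?_⟩
  have hp_coeff := coeff_eq_esymm_roots_of_card (p := p) (by rw [hp_roots, hs, hp_deg])
    (k := N - j + 1) (by omega)
  have hq_coeff := coeff_eq_esymm_roots_of_card hq_roots (k := N - j) (by omega)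
  rw [hp_deg, hp_monic.leadingCoeff, hp_roots, show N + 1 - (N - j + 1) = j by omega] at hp_coeff
  rw [leadingCoeff, hq_deg, hq_top, show N - (N - j) = j by omega, coeff_derivative, hp_coeff,
    Nat.cast_sub hj] at hq_coeff
  apply mul_left_cancel₀ (pow_ne_zero j (by norm_num : (-1 : ℝ) ≠ 0))
  linear_combination -hq_coeff

noncomputable def esymmMean (s : Multiset ℝ) (j : ℕ) : ℝ :=
  s.esymm j / (card s).choose j

theorem esymmMean_zero (s : Multiset ℝ) : s.esymmMean 0 = 1 := by
  simp [esymmMean, esymm_zero]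

theorem esymmMean_eq_zero_of_card_lt {s : Multiset ℝ} {j : ℕ} (h : card s < j) :
    s.esymmMean j = 0 := by
  simp [esymmMean, esymm_eq_zero_of_card_lt h]

theorem exists_card_eq_esymmMean_eq (s : Multiset ℝ) {N : ℕ} (hs : card s = N + 1) :
    ∃ u : Multiset ℝ, card u = N ∧ ∀ j ≤ N, u.esymmMean j = s.esymmMean j := by
  obtain ⟨u, hu, hesymm⟩ := exists_card_eq_mul_esymm_eq s hs
  refine ⟨u, hu, fun j hj => ?_⟩
  have hchoose : (N.choose j : ℝ) * (N + 1) = (N + 1).choose j * ((N : ℝ) + 1 - j) := by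
    have := Nat.choose_mul_succ_eq N j
    rw [← Nat.cast_inj (R := ℝ)] at this
    push_cast [Nat.cast_sub (show j ≤ N + 1 by omega)] at this
    exact this
  have hN : (N.choose j : ℝ) ≠ 0 := by exact_mod_cast (Nat.choose_pos hj).ne'
  have hN1 : ((N + 1).choose j : ℝ) ≠ 0 := by exact_mod_cast (Nat.choose_pos (by omega)).ne'
  rw [esymmMean, esymmMean, hu, hs, div_eq_div_iff hN hN1]
  apply mul_left_cancel₀ (show (N : ℝ) + 1 ≠ 0 by positivity)
  linear_combination ((N + 1).choose j : ℝ) * hesymm j hj - s.esymm j * hchoose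

theorem esymmMean_eq_prod_mul_esymmMean_map_inv {s : Multiset ℝ} (h0 : (0 : ℝ) ∉ s) {i j : ℕ}
    (hij : i + j = card s) : s.esymmMean j = s.prod * (s.map (·⁻¹)).esymmMean i := by
  rw [esymmMean, esymmMean, card_map, Nat.choose_symm_of_eq_add hij.symm, mul_div_assoc',
    prod_mul_esymm_map_inv h0 hij]

theorem esymmMean_two_le_sq_esymmMean_one (s : Multiset ℝ) :
    s.esymmMean 2 ≤ s.esymmMean 1 ^ 2 := by
  rcases lt_or_ge (card s) 2 with h | h
  · rw [esymmMean_eq_zero_of_card_lt h]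
    positivity
  have hcs := sq_sum_le_card_mul_sum_sq s
  have hid := sq_sum_eq_sum_sq_add_two_mul_esymm_two s
  have hN : (2 : ℝ) ≤ card s := by exact_mod_cast h
  rw [← esymm_one] at hcs hid
  rw [esymmMean, esymmMean, Nat.choose_one_right, Nat.cast_choose_two, div_pow, div_le_div_iff₀ (by nlinarith) (by positivity)]
  nlinarith

theorem esymmMean_mul_esymmMean_le_sq (s : Multiset ℝ) (m : ℕ) :
    s.esymmMean m * s.esymmMean (m + 2) ≤ s.esymmMean (m + 1) ^ 2 := by
  rcases lt_or_ge (card s) (m + 2) with h | h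
  · rw [esymmMean_eq_zero_of_card_lt h, mul_zero]
    positivity
  obtain ⟨d, hd⟩ := Nat.exists_eq_add_of_le h
  induction d generalizing s with
  | zero =>
    by_cases h0 : (0 : ℝ) ∈ s
    · have htop : s.esymmMean (m + 2) = 0 := by
        rw [esymmMean, show m + 2 = card s by omega, esymm_card, prod_eq_zero h0, zero_div]
      rw [htop, mul_zero]
      positivity
    rw [esymmMean_eq_prod_mul_esymmMean_map_inv h0 (i := 2) (j := m) (by omega),
      esymmMean_eq_prod_mul_esymmMean_map_inv h0 (i := 1) (j := m + 1) (by omega),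
      esymmMean_eq_prod_mul_esymmMean_map_inv h0 (i := 0) (j := m + 2) (by omega),
      esymmMean_zero]
    have := esymmMean_two_le_sq_esymmMean_one (s.map (·⁻¹))
    nlinarith [sq_nonneg s.prod]
  | succ d ih =>
    obtain ⟨u, hu, hmean⟩ := exists_card_eq_esymmMean_eq s (N := m + 2 + d) (by omega)
    rw [← hmean m (by omega), ← hmean (m + 1) (by omega), ← hmean (m + 2) (by omega)]
    exact ih u (by omega) hu

theorem esymm_mul_esymm_lt_sq {s : Multiset ℝ} {m : ℕ} (h : 0 < s.esymm m * s.esymm (m + 2)) :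
    s.esymm m * s.esymm (m + 2) < s.esymm (m + 1) ^ 2 := by
  have hm : m + 2 ≤ card s := by
    by_contra! hlt
    rw [esymm_eq_zero_of_card_lt hlt, mul_zero] at h
    exact lt_irrefl 0 h
  have hC : ((card s).choose m : ℝ) * (card s).choose (m + 2) < (card s).choose (m + 1) ^ 2 := by
    exact_mod_cast Nat.choose_mul_choose_add_two_lt_sq hm
  have hC0 : (0 : ℝ) < (card s).choose m := by exact_mod_cast Nat.choose_pos (by omega)
  have hC1 : (0 : ℝ) < (card s).choose (m + 1) := by exact_mod_cast Nat.choose_pos (by omega)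
  have hC2 : (0 : ℝ) < (card s).choose (m + 2) := by exact_mod_cast Nat.choose_pos hm
  have hnewton := esymmMean_mul_esymmMean_le_sq s m
  rw [esymmMean, esymmMean, esymmMean, div_mul_div_comm, div_pow,
    div_le_div_iff₀ (by positivity) (by positivity)] at hnewton
  nlinarith [mul_pos hC0 hC2]

theorem esymm_mul_esymm_le_sq (s : Multiset ℝ) (m : ℕ) :
    s.esymm m * s.esymm (m + 2) ≤ s.esymm (m + 1) ^ 2 := by
  rcases le_or_gt (s.esymm m * s.esymm (m + 2)) 0 with h | h
  · exact h.trans (sq_nonneg _)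
  · exact (esymm_mul_esymm_lt_sq h).le

theorem esymm_pos_of_esymm_cons_pos {x : ℝ} {t : Multiset ℝ} {k : ℕ}
    (h : ∀ j ≤ k + 1, 0 < (x ::ₘ t).esymm j) : ∀ j ≤ k, 0 < t.esymm j := by
  induction k with
  | zero =>
    intro j hj
    rw [Nat.le_zero.mp hj, esymm_zero]
    exact one_pos
  | succ k ih =>
    have ih := ih fun j hj => h j (by omega)
    intro j hj
    rcases hj.lt_or_eq with hj | rfl
    · exact ih j (by omega)
    by_contra! hneg
    have h1 := h (k + 1) (by omega)
    have h2 := h (k + 2) (by omega)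
    rw [esymm_cons_succ_s7] at h1 h2
    have hk := ih k le_rfl
    have := esymm_mul_esymm_le_sq t k
    -- `σ_{k+1}(t) ≤ 0` forces `x > 0` and `σ_{k+2}(t) > 0`, whence `σ_k σ_{k+2} > σ_{k+1}²`
    nlinarith

theorem esymm_cons_mul_esymm_lt {x : ℝ} {t : Multiset ℝ} {k j : ℕ}
    (h : ∀ i ≤ k + 1, 0 < (x ::ₘ t).esymm i) (hjk : j < k) :
    (x ::ₘ t).esymm (k + 1) * t.esymm j < t.esymm k * (x ::ₘ t).esymm (j + 1) := by
  have ht := esymm_pos_of_esymm_cons_pos h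
  have key : t.esymm (k + 1) * t.esymm j < t.esymm k * t.esymm (j + 1) := by
    refine mul_lt_mul_of_mul_lt_sq ht (fun m hm => ?_) hjk
    rcases le_or_gt (t.esymm m * t.esymm (m + 2)) 0 with hle | hgt
    · exact hle.trans_lt (pow_pos (ht (m + 1) (by omega)) 2)
    · exact esymm_mul_esymm_lt_sq hgt
  rw [esymm_cons_succ_s7, esymm_cons_succ_s7]
  linarith

end Multiset

theorem esymm_eq_esymm_cons_erase {n : ℕ} (lam : Fin n → ℝ) (i : Fin n) (m : ℕ) :
    esymm n m lam = (lam i ::ₘ (Finset.univ.erase i).val.map lam).esymm m := by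
  rw [esymm, ← Finset.esymm_map_val, ← Multiset.map_cons, Finset.erase_val,
    Multiset.cons_erase (Finset.mem_univ i)]

theorem esymm_update_zero {n : ℕ} (lam : Fin n → ℝ) (i : Fin n) (m : ℕ) :
    esymm n m (Function.update lam i 0) = ((Finset.univ.erase i).val.map lam).esymm m := by
  rw [esymm_eq_esymm_cons_erase, Function.update_self, Multiset.esymm_zero_cons]
  congr 1
  exact Multiset.map_congr rfl fun j hj =>
    Function.update_of_ne (Finset.ne_of_mem_erase (Finset.mem_val.mp hj)) 0 lam

theorem deleted_quotient_strict_general (n k l : ℕ) (hl1 : 1 ≤ l) (hlk : l < k)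
    (lam : Fin n → ℝ) (hlam : lam ∈ GammaCone n k) (i : Fin n) :
    0 < esymm n (l - 1) (Function.update lam i 0) ∧
    0 < esymm n l lam ∧
    esymm n (k - 1) (Function.update lam i 0) * esymm n l lam
      > esymm n k lam * esymm n (l - 1) (Function.update lam i 0) ∧
    esymm n (k - 1) (Function.update lam i 0) / esymm n (l - 1) (Function.update lam i 0)
      > esymm n k lam / esymm n l lam := by
  obtain ⟨j, rfl⟩ : ∃ j, l = j + 1 := ⟨l - 1, by omega⟩
  obtain ⟨k, rfl⟩ : ∃ k', k = k' + 1 := ⟨k - 1, by omega⟩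
  have hcone : ∀ m ≤ k + 1, 0 < (lam i ::ₘ (Finset.univ.erase i).val.map lam).esymm m := by
    rintro (_ | m) hm
    · simp [Multiset.esymm_zero]
    · rw [← esymm_eq_esymm_cons_erase]
      exact hlam (m + 1) (by omega) hm
  simp only [Nat.add_sub_cancel, esymm_update_zero, esymm_eq_esymm_cons_erase lam i]
  have hdel := Multiset.esymm_pos_of_esymm_cons_pos hcone j (by omega)
  have hl := hcone (j + 1) (by omega)
  have hlt := Multiset.esymm_cons_mul_esymm_lt hcone (by omega : j < k)
  refine ⟨hdel, hl, hlt, ?_⟩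
  rw [gt_iff_lt, div_lt_div_iff₀ hl hdel]
  exact hlt

/-- Lemma 2.8, first part: for `1 ≤ l < k ≤ n` and `λ ∈ Γ_k`, for every index `i`
one has `σ_{l-1}(λ|i) > 0`, `σ_l(λ) > 0`, the strict inequality
`σ_{k-1}(λ|i) σ_l(λ) > σ_k(λ) σ_{l-1}(λ|i)`, and equivalently
`σ_{k-1}(λ|i)/σ_{l-1}(λ|i) > σ_k(λ)/σ_l(λ)`. -/
theorem deleted_quotient_strict (n k l : ℕ) (hn : 2 ≤ n) (hl1 : 1 ≤ l) (hlk : l < k)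
    (hkn : k ≤ n) (lam : Fin n → ℝ) (hlam : lam ∈ GammaCone n k) (i : Fin n) :
    0 < esymm n (l - 1) (Function.update lam i 0) ∧
    0 < esymm n l lam ∧
    esymm n (k - 1) (Function.update lam i 0) * esymm n l lam
      > esymm n k lam * esymm n (l - 1) (Function.update lam i 0) ∧
    esymm n (k - 1) (Function.update lam i 0) / esymm n (l - 1) (Function.update lam i 0)
      > esymm n k lam / esymm n l lam :=
  deleted_quotient_strict_general n k l hl1 hlk lam hlam i
end

section
/- (Lemma 2.13, inequality (2.10).) Let n ≥ 2 and 2 ≤ k ≤ n. For all real numbers b > 0 and B > 0 there exists a constant C > 0, depending only on n, k, b, B, with the following property: if λ ∈ Γ_{k-1} and β_0,…,β_{k-1} are real numbers with b ≤ β_l ≤ B for all 0 ≤ l ≤ k−2 and |β_{k-1}| ≤ B, satisfying σ_k(λ)/σ_{k-1}(λ) = Σ_{l=0}^{k-2} β_l · σ_l(λ)/σ_{k-1}(λ) + β_{k-1}, then −B ≤ σ_k(λ)/σ_{k-1}(λ) ≤ C. -/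
/-!
Everything rests on the log-concavity `σ_j σ_{j+2} ≤ σ_{j+1}²` of the elementary symmetric
functions of an arbitrary real vector. It comes from the real-rootedness of
`P = ∏ (X + λ_i)`: by Rolle, `P^{(n-j-2)}` is again real-rooted, its three lowest coefficients are
positive multiples of `σ_{j+2}, σ_{j+1}, σ_j`, and for a real-rooted polynomial
`2 a₀ a₂ ≤ a₁²`.

On `Γ_{k-1}` the equation exhibits `σ_k/σ_{k-1}` as `β_{k-1}` plus a nonnegative sum, whence the
lower bound. For the upper bound, log-concavity of the positive sequence `σ_0, …, σ_{k-1}` gives a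
dichotomy: either `σ_{k-2} ≤ σ_{k-1}`, and then every `σ_l` with `l ≤ k-1` is at most `σ_{k-1}`, so
the right-hand side is at most `kB`; or `σ_{k-1} < σ_{k-2}`, and then `σ_k < σ_{k-1}`.
-/

open Polynomial Finset

namespace Polynomial

theorem two_mul_coeff_zero_mul_coeff_two_le_multiset_prod_X_sub_C (s : Multiset ℝ) :
    2 * (s.map fun a => X - C a).prod.coeff 0 * (s.map fun a => X - C a).prod.coeff 2
      ≤ (s.map fun a => X - C a).prod.coeff 1 ^ 2 := by
  induction s using Multiset.induction_on with
  | empty => simp [coeff_one]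
  | cons a s ih =>
    set p := (s.map fun a => X - C a).prod
    have hcoeff : ∀ i, ((X - C a) * p).coeff (i + 1) = p.coeff i - a * p.coeff (i + 1) := by
      intro i
      rw [sub_mul, coeff_sub, coeff_X_mul, coeff_C_mul]
    have hcoeff0 : ((X - C a) * p).coeff 0 = -(a * p.coeff 0) := by
      simp [sub_mul]
    rw [Multiset.map_cons, Multiset.prod_cons, hcoeff0, hcoeff 0, hcoeff 1]
    -- the defect `a₁² - 2 a₀ a₂` becomes `p₀² + a² · (p₁² - 2 p₀ p₂)`
    nlinarith [sq_nonneg (p.coeff 0), mul_nonneg (sq_nonneg a) (sub_nonneg.2 ih)]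

theorem Splits.two_mul_coeff_zero_mul_coeff_two_le_s14 {p : ℝ[X]} (hp : p.Splits) :
    2 * p.coeff 0 * p.coeff 2 ≤ p.coeff 1 ^ 2 := by
  have hprod := two_mul_coeff_zero_mul_coeff_two_le_multiset_prod_X_sub_C p.roots
  rw [hp.eq_prod_roots]
  simp only [coeff_C_mul]
  nlinarith [mul_le_mul_of_nonneg_left hprod (sq_nonneg p.leadingCoeff)]

theorem Splits.derivative {p : ℝ[X]} (hp : p.Splits) : p.derivative.Splits := by
  rw [splits_iff_card_roots] at hp ⊢
  have hrolle := card_roots_le_derivative p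
  have hdeg := natDegree_derivative_le p
  have hroots := card_roots' (Polynomial.derivative p)
  omega

theorem Splits.iterate_derivative {p : ℝ[X]} (hp : p.Splits) (N : ℕ) :
    (Polynomial.derivative^[N] p).Splits := by
  induction N with
  | zero => exact hp
  | succ N ih => rw [Function.iterate_succ_apply']; exact ih.derivative

end Polynomial

theorem esymm_zero (n : ℕ) (lam : Fin n → ℝ) : esymm n 0 lam = 1 := by
  simp [esymm]

theorem esymm_eq_zero_of_lt {n j : ℕ} (lam : Fin n → ℝ) (h : n < j) : esymm n j lam = 0 := by
  rw [esymm, powersetCard_eq_empty.2 (by simpa using h), sum_empty]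

theorem coeff_prod_X_add_C_eq_esymm {n m : ℕ} (lam : Fin n → ℝ) (hm : m ≤ n) :
    (∏ i, (X + C (lam i))).coeff m = esymm n (n - m) lam := by
  rw [Finset.prod_X_add_C_coeff _ _ (by simpa using hm), card_univ, Fintype.card_fin]
  rfl

theorem esymm_pos_of_mem_gammaCone {n k j : ℕ} {lam : Fin n → ℝ} (hlam : lam ∈ GammaCone n k)
    (hj : j ≤ k) : 0 < esymm n j lam := by
  rcases Nat.eq_zero_or_pos j with rfl | hj0
  · simp [esymm_zero]
  · exact hlam j hj0 hj

theorem esymm_mul_esymm_add_two_le_sq (n j : ℕ) (lam : Fin n → ℝ) :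
    esymm n j lam * esymm n (j + 2) lam ≤ esymm n (j + 1) lam ^ 2 := by
  rcases lt_or_ge n (j + 2) with hn | hn
  · rw [esymm_eq_zero_of_lt lam hn, mul_zero]
    positivity
  set N := n - (j + 2)
  set Q := Polynomial.derivative^[N] (∏ i, (X + C (lam i)))
  have hQ : Q.Splits := (Splits.prod fun i _ => Splits.X_add_C (lam i)).iterate_derivative N
  have hcoeff : ∀ i ≤ 2, Q.coeff i = (N + i).descFactorial N * esymm n (j + 2 - i) lam := by
    intro i hi
    rw [coeff_iterate_derivative, nsmul_eq_mul, coeff_prod_X_add_C_eq_esymm lam (by omega),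
      show n - (i + N) = j + 2 - i by omega, add_comm i]
  have hd1 : (N + 1).descFactorial N = (N + 1) * N.factorial := by
    simpa [Nat.descFactorial_self] using N.succ_descFactorial N
  have hd2 : 2 * (N + 2).descFactorial N = (N + 2) * (N + 1).descFactorial N := by
    simpa [show N + 1 + 1 - N = 2 by omega] using (N + 1).succ_descFactorial N
  have hbottom := hQ.two_mul_coeff_zero_mul_coeff_two_le_s14
  rw [hcoeff 0 (by omega), hcoeff 1 (by omega), hcoeff 2 (by omega)] at hbottom
  simp only [add_zero, Nat.sub_zero, show j + 2 - 1 = j + 1 by omega, Nat.add_sub_cancel,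
    Nat.descFactorial_self] at hbottom
  set F : ℝ := Nat.cast N.factorial
  set a : ℝ := Nat.cast ((N + 1).descFactorial N)
  set c : ℝ := Nat.cast ((N + 2).descFactorial N)
  have ha : a = (N + 1) * F := by simp only [a, F, hd1]; push_cast; rfl
  have hc : 2 * c = (N + 2) * a := by simp only [a, c]; exact_mod_cast hd2
  have hF : 0 < F := by simp only [F]; exact_mod_cast N.factorial_pos
  have hcancel : ((N + 1) * F ^ 2) * ((N + 2) * (esymm n j lam * esymm n (j + 2) lam))
      ≤ ((N + 1) * F ^ 2) * ((N + 1) * esymm n (j + 1) lam ^ 2) := by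
    linear_combination hbottom - F * esymm n j lam * esymm n (j + 2) lam * hc
      + (esymm n (j + 1) lam ^ 2 * (a + (N + 1) * F)
        - F * esymm n j lam * esymm n (j + 2) lam * (N + 2)) * ha
  have hNewton := le_of_mul_le_mul_left hcancel (by positivity)
  nlinarith [sq_nonneg (esymm n (j + 1) lam)]

theorem lt_of_mul_le_sq {x y z : ℝ} (hy : 0 < y) (h : x * z ≤ y ^ 2) (hyx : y < x) : z < y := by
  by_contra! hyz
  nlinarith [mul_le_mul_of_nonneg_left hyz (hy.trans hyx).le]

theorem le_of_mul_le_sq {x y z : ℝ} (hy : 0 < y) (h : x * z ≤ y ^ 2) (hyz : y ≤ z) : x ≤ y :=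
  not_lt.1 fun hyx => (lt_of_mul_le_sq hy h hyx).not_ge hyz

theorem le_of_logConcave_of_le {a : ℕ → ℝ} {N : ℕ} (hpos : ∀ l ≤ N + 1, 0 < a l)
    (hconc : ∀ l < N, a l * a (l + 2) ≤ a (l + 1) ^ 2) (hN : a N ≤ a (N + 1)) {l : ℕ}
    (hl : l ≤ N + 1) : a l ≤ a (N + 1) := by
  have hstep : ∀ m ≤ N, a m ≤ a (m + 1) ∧ a (m + 1) ≤ a (N + 1) := by
    intro m hm
    induction hm using Nat.decreasingInduction with
    | self => exact ⟨hN, le_rfl⟩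
    | of_succ m hm ih =>
      exact ⟨le_of_mul_le_sq (hpos _ (by omega)) (hconc m hm) ih.1, ih.1.trans ih.2⟩
  rcases hl.lt_or_eq with hl | rfl
  · exact (hstep l (by omega)).1.trans (hstep l (by omega)).2
  · exact le_rfl

theorem main_ratio_bound_general (n k : ℕ) (hk : 2 ≤ k)
    (b B : ℝ) (hb : 0 < b) (hB : 0 < B) :
    ∃ C > (0 : ℝ), ∀ lam ∈ GammaCone n (k - 1), ∀ β : ℕ → ℝ,
      (∀ l ≤ k - 2, b ≤ β l ∧ β l ≤ B) → ∀ βlast : ℝ, |βlast| ≤ B →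
      esymm n k lam / esymm n (k - 1) lam
          = (∑ l ∈ Finset.range (k - 1), β l * (esymm n l lam / esymm n (k - 1) lam))
            + βlast →
      -B ≤ esymm n k lam / esymm n (k - 1) lam ∧
      esymm n k lam / esymm n (k - 1) lam ≤ C := by
  obtain ⟨m, rfl⟩ : ∃ m, k = m + 2 := ⟨k - 2, by omega⟩
  refine ⟨(m + 2) * B + 1, by positivity, fun lam hlam β hβ βlast hβlast heq => ?_⟩
  simp only [Nat.add_sub_cancel, show m + 2 - 1 = m + 1 from rfl] at hlam hβ heq ⊢
  have hpos : ∀ l ≤ m + 1, 0 < esymm n l lam := fun l hl => esymm_pos_of_mem_gammaCone hlam hl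
  have hterm_nonneg : ∀ l ∈ range (m + 1), 0 ≤ β l * (esymm n l lam / esymm n (m + 1) lam) := by
    intro l hl
    have hl := mem_range.1 hl
    exact mul_nonneg (hb.le.trans (hβ l (by omega)).1)
      (div_nonneg (hpos l hl.le).le (hpos _ le_rfl).le)
  obtain ⟨hβlast_lower, hβlast_upper⟩ := abs_le.mp hβlast
  refine ⟨by linarith [sum_nonneg hterm_nonneg], ?_⟩
  rcases le_or_gt (esymm n m lam) (esymm n (m + 1) lam) with hmono | hdrop
  · have hterm_le : ∀ l ∈ range (m + 1), β l * (esymm n l lam / esymm n (m + 1) lam) ≤ B := by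
      intro l hl
      simp only [mem_range] at hl
      have hσ := le_of_logConcave_of_le hpos (fun l _ => esymm_mul_esymm_add_two_le_sq n l lam)
        hmono hl.le
      have hβl := hβ l (by omega)
      exact (mul_le_of_le_one_right (hb.le.trans hβl.1) ((div_le_one (hpos _ le_rfl)).2 hσ)).trans
        hβl.2
    have hsum := sum_le_card_nsmul _ _ _ hterm_le
    simp only [card_range, nsmul_eq_mul, Nat.cast_add, Nat.cast_one] at hsum
    linarith
  · have hσ : esymm n (m + 2) lam < esymm n (m + 1) lam :=
      lt_of_mul_le_sq (hpos _ le_rfl) (esymm_mul_esymm_add_two_le_sq n m lam) hdrop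
    have hratio := (div_lt_one (hpos _ le_rfl)).2 hσ
    nlinarith

/-- Lemma 2.13, inequality (2.10): for all `b, B > 0` there is `C > 0` depending
only on `n, k, b, B` such that whenever `λ ∈ Γ_{k-1}` solves the equation
`σ_k/σ_{k-1} = ∑_{l=0}^{k-2} β_l σ_l/σ_{k-1} + β_{k-1}` with `b ≤ β_l ≤ B` for
`0 ≤ l ≤ k−2` and `|β_{k-1}| ≤ B`, then `−B ≤ σ_k/σ_{k-1} ≤ C`. -/
theorem main_ratio_bound (n k : ℕ) (hn : 2 ≤ n) (hk : 2 ≤ k) (hkn : k ≤ n)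
    (b B : ℝ) (hb : 0 < b) (hB : 0 < B) :
    ∃ C > (0 : ℝ), ∀ lam ∈ GammaCone n (k - 1), ∀ β : ℕ → ℝ,
      (∀ l ≤ k - 2, b ≤ β l ∧ β l ≤ B) → ∀ βlast : ℝ, |βlast| ≤ B →
      esymm n k lam / esymm n (k - 1) lam
          = (∑ l ∈ Finset.range (k - 1), β l * (esymm n l lam / esymm n (k - 1) lam))
            + βlast →
      -B ≤ esymm n k lam / esymm n (k - 1) lam ∧
      esymm n k lam / esymm n (k - 1) lam ≤ C :=
  main_ratio_bound_general n k hk b B hb hB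
end
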